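/- Let F be a field of characteristic zero, A = F[x,y], n > 1, and d²(a,b) = y^{n-1}(∂a/∂x + y·∂b/∂y) − (n−1)·y^{n-1}·b. Then the quotient A/Im(d²) is isomorphic as an F-vector space to ⊕_{i=0}^{n-2} y^i F[x]; i.e., the second logarithmic Poisson cohomology group H² ≅ ⊕_{i=0}^{n-2} y^i F[x], which is infinite-dimensional over F and nonzero for n > 1. -/

import Mathlib

/-!
Both `Im d²` and `⊕_{i ≤ n-2} y^i F[x]` are spanned by monomials. Every element of `Im d²` is
a multiple of `y^{n-1}`, and conversely `x^a y^b` with `b ≥ n - 1` is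
`d²(x^{a+1} y^{b-n+1}/(a+1), 0)` (this is where characteristic zero enters). So the two subspaces
are spanned by complementary sets of monomials, hence complementary, and the quotient is
isomorphic to the second one, which has a basis indexed by the infinite set of exponents
`{(a, b) | b ≤ n - 2}`.
-/

open MvPolynomial

noncomputable section

abbrev PolyA (F : Type*) [Field F] := MvPolynomial (Fin 2) F

/-- `d²(a,b) = y^{n-1}(∂a/∂x + y·∂b/∂y) − (n−1)·y^{n-1}·b` as an `F`-linear map. -/
def d2l (F : Type*) [Field F] (n : ℕ) : PolyA F × PolyA F →ₗ[F] PolyA F :=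
  (LinearMap.mulLeft F ((X 1 : PolyA F) ^ (n - 1))).comp
    ((pderiv 0).toLinearMap.comp (LinearMap.fst F (PolyA F) (PolyA F)) +
      (LinearMap.mulLeft F (X 1 : PolyA F)).comp
        ((pderiv 1).toLinearMap.comp (LinearMap.snd F (PolyA F) (PolyA F))) -
      ((n : F) - 1) • LinearMap.snd F (PolyA F) (PolyA F))

/-- `⊕_{i=0}^{n-2} y^i F[x]`, the subspace of polynomials of `y`-degree at most `n−2`. -/
def lowY (F : Type*) [Field F] (n : ℕ) : Submodule F (PolyA F) :=
  Submodule.span F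
    ((fun q : ℕ × ℕ => (X 0 : PolyA F) ^ q.1 * X 1 ^ q.2) '' {q | q.2 ≤ n - 2})

namespace MvPolynomial

variable {R σ : Type*}

lemma isCompl_restrictSupport [CommSemiring R] {s t : Set (σ →₀ ℕ)} (hst : IsCompl s t) :
    IsCompl (restrictSupport R s) (restrictSupport R t) := by
  simpa [restrictSupport_eq_span] using
    (basisMonomials σ R).linearIndependent.isCompl_span_image (basisMonomials σ R).span_eq hst

lemma not_finite_restrictSupport [CommSemiring R] [Nontrivial R] {s : Set (σ →₀ ℕ)}
    (hs : s.Infinite) : ¬ Module.Finite R (restrictSupport R s) :=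
  have := hs.to_subtype
  Module.not_finite_of_infinite_basis (basisRestrictSupport R s)

lemma X_pow_mul_mem_restrictSupport [CommSemiring R] (i : σ) (k : ℕ) (p : MvPolynomial σ R) :
    X i ^ k * p ∈ restrictSupport R {d : σ →₀ ℕ | k ≤ d i} := by
  have hup : IsUpperSet {d : σ →₀ ℕ | k ≤ d i} := fun _ _ hde hd => le_trans hd (hde i)
  have hXk : X i ^ k ∈ restrictSupportIdeal (R := R) _ hup := by
    show X i ^ k ∈ restrictSupport R _
    simp [X_pow_eq_monomial]
  exact Ideal.mul_mem_right p _ hXk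

end MvPolynomial

section LogarithmicComplex

variable (F : Type*) [Field F]

lemma d2l_apply_zero_right (n : ℕ) (a : PolyA F) :
    d2l F n (a, 0) = X 1 ^ (n - 1) * pderiv 0 a := by
  simp [d2l]

lemma range_d2l_eq_restrictSupport [CharZero F] (n : ℕ) :
    LinearMap.range (d2l F n) = restrictSupport F {d | n - 1 ≤ d 1} := by
  refine le_antisymm ?_ ?_
  · rintro _ ⟨ab, rfl⟩
    exact X_pow_mul_mem_restrictSupport 1 (n - 1) _
  · rw [restrictSupport_eq_span, Submodule.span_le]
    rintro _ ⟨d, hd, rfl⟩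
    refine ⟨(monomial (d - Finsupp.single 1 (n - 1) + Finsupp.single 0 1) (d 0 + 1 : F)⁻¹, 0),
      ?_⟩
    rw [d2l_apply_zero_right, pderiv_monomial, X_pow_eq_monomial, monomial_mul,
      add_tsub_cancel_right]
    congr 2
    · exact add_tsub_cancel_of_le (Finsupp.single_le_iff.mpr hd)
    · have : (d 0 + 1 : F) ≠ 0 := by exact_mod_cast (d 0).succ_ne_zero
      simp [this]

lemma lowY_eq_restrictSupport (n : ℕ) :
    lowY F n = restrictSupport F {d | d 1 ≤ n - 2} := by
  rw [restrictSupport_eq_span, lowY]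
  congr 1
  ext p
  constructor
  · rintro ⟨⟨a, b⟩, hb, rfl⟩
    refine ⟨Finsupp.single 0 a + Finsupp.single 1 b, by simpa using hb, ?_⟩
    simp [monomial_fin_two]
  · rintro ⟨d, hd, rfl⟩
    exact ⟨(d 0, d 1), hd, by simp [monomial_fin_two]⟩

end LogarithmicComplex

lemma Finsupp.infinite_setOf_apply_le {σ : Type*} {i j : σ} (hij : i ≠ j) (m : ℕ) :
    {d : σ →₀ ℕ | d i ≤ m}.Infinite :=
  Set.infinite_of_injective_forall_mem (Finsupp.single_injective j) fun k => by
    simp [Finsupp.single_eq_of_ne hij]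

/-- `H² = A/Im(d²) ≅ ⊕_{i=0}^{n-2} y^i F[x]`, which is infinite-dimensional over `F`
and nonzero for `n > 1`. -/
theorem stmt17 (F : Type*) [Field F] [CharZero F] (n : ℕ) (hn : 1 < n) :
    Nonempty ((PolyA F ⧸ LinearMap.range (d2l F n)) ≃ₗ[F] ↥(lowY F n)) ∧
      ¬ Module.Finite F (PolyA F ⧸ LinearMap.range (d2l F n)) ∧
      Nontrivial (PolyA F ⧸ LinearMap.range (d2l F n)) := by
  have hexp : {d : Fin 2 →₀ ℕ | n - 1 ≤ d 1} = {d | d 1 ≤ n - 2}ᶜ := by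
    ext d; show n - 1 ≤ d 1 ↔ ¬ d 1 ≤ n - 2; omega
  have hcompl : IsCompl (LinearMap.range (d2l F n)) (lowY F n) := by
    rw [range_d2l_eq_restrictSupport, lowY_eq_restrictSupport, hexp]
    exact isCompl_restrictSupport isCompl_compl.symm
  let e := Submodule.quotientEquivOfIsCompl _ _ hcompl
  have hinf : ¬ Module.Finite F (PolyA F ⧸ LinearMap.range (d2l F n)) := fun _ =>
    not_finite_restrictSupport (Finsupp.infinite_setOf_apply_le (j := 0) one_ne_zero (n - 2))
      (lowY_eq_restrictSupport F n ▸ Module.Finite.equiv e)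
  exact ⟨⟨e⟩, hinf, not_subsingleton_iff_nontrivial.mp fun _ => hinf inferInstance⟩
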